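/- Head monomial of a G-polynomial: let R be a commutative ring, σ a finite type, and m a monomial order on σ →₀ ℕ. Let p₁, …, p_j be nonzero polynomials in MvPolynomial σ R, let t : σ →₀ ℕ satisfy m.degree p_i ≤ t pointwise for all i, and let h₁, …, h_j ∈ R be such that g = Σ_i h_i · (m.leadCoeff p_i) ≠ 0. Then the G-polynomial q = Σ_i h_i • X^(t − m.degree p_i) * p_i satisfies m.degree q = t and m.leadCoeff q = g. -/

import Mathlib

open MvPolynomial

/-- Head term of a polynomial with respect to a monomial order. -/
noncomputable def MonomialOrder.degree' {σ R : Type*} [CommSemiring R] (m : MonomialOrder σ)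
    (p : MvPolynomial σ R) : σ →₀ ℕ :=
  m.toSyn.symm (p.support.sup fun s => m.toSyn s)

/-- Head coefficient of a polynomial with respect to a monomial order. -/
noncomputable def MonomialOrder.leadCoeff' {σ R : Type*} [CommSemiring R] (m : MonomialOrder σ)
    (p : MvPolynomial σ R) : R :=
  p.coeff (m.degree' p)

/-! The head term of `Σ hᵢ • X^(t - HT(pᵢ)) * pᵢ` is at most `t` summand by summand, and its
coefficient at `t` is `Σ hᵢ · HC(pᵢ)`; once that coefficient is nonzero, `t` is the head term. -/

namespace MonomialOrder

variable {σ R : Type*} [CommSemiring R] (m : MonomialOrder σ)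

theorem degree'_eq_degree (p : MvPolynomial σ R) : m.degree' p = m.degree p := rfl

theorem leadCoeff'_eq_leadingCoeff (p : MvPolynomial σ R) :
    m.leadCoeff' p = m.leadingCoeff p := rfl

variable {m}

theorem degree_sum_le_of_forall_le {ι : Type*} {s : Finset ι} {f : ι → MvPolynomial σ R}
    {t : σ →₀ ℕ} (hf : ∀ i ∈ s, m.degree (f i) ≼[m] t) :
    m.degree (∑ i ∈ s, f i) ≼[m] t :=
  m.degree_sum_le.trans (Finset.sup_le hf)

theorem degree_eq_of_degree_le_of_coeff_ne_zero {q : MvPolynomial σ R} {t : σ →₀ ℕ}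
    (hle : m.degree q ≼[m] t) (hq : q.coeff t ≠ 0) : m.degree q = t :=
  m.toSyn.injective (le_antisymm hle (m.le_degree (mem_support_iff.mpr hq)))

theorem degree_smul_monomial_sub_degree_mul_le {p : MvPolynomial σ R} {t : σ →₀ ℕ}
    (ht : m.degree p ≤ t) (r : R) :
    m.degree (r • monomial (t - m.degree p) (1 : R) * p) ≼[m] t := by
  calc m.toSyn (m.degree (r • monomial (t - m.degree p) (1 : R) * p))
      ≤ m.toSyn (m.degree (r • monomial (t - m.degree p) (1 : R))) + m.toSyn (m.degree p) := by
        simpa only [map_add] using m.degree_mul_le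
    _ ≤ m.toSyn (t - m.degree p) + m.toSyn (m.degree p) :=
        add_le_add_left (m.degree_smul_le.trans (m.degree_monomial_le 1)) _
    _ = m.toSyn t := by rw [← map_add, tsub_add_cancel_of_le ht]

end MonomialOrder

theorem MvPolynomial.coeff_smul_monomial_sub_mul {σ R : Type*} [CommSemiring R]
    {d t : σ →₀ ℕ} (hd : d ≤ t) (r : R) (p : MvPolynomial σ R) :
    (r • monomial (t - d) (1 : R) * p).coeff t = r * p.coeff d := by
  rw [smul_mul_assoc, coeff_smul, coeff_monomial_mul', if_pos tsub_le_self, one_mul,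
    tsub_tsub_cancel_of_le hd, smul_eq_mul]

open MonomialOrder in
theorem gPolynomial_head_general {σ R ι : Type*} [CommRing R]
    (m : MonomialOrder σ) (F : Finset ι) (p : ι → MvPolynomial σ R)
    (t : σ →₀ ℕ) (ht : ∀ i ∈ F, m.degree' (p i) ≤ t)
    (h : ι → R) (hg : ∑ i ∈ F, h i * m.leadCoeff' (p i) ≠ 0) :
    m.degree' (∑ i ∈ F, h i • (monomial (t - m.degree' (p i)) 1 : MvPolynomial σ R) * p i) = t ∧
      m.leadCoeff' (∑ i ∈ F, h i • (monomial (t - m.degree' (p i)) 1 : MvPolynomial σ R) * p i) =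
        ∑ i ∈ F, h i * m.leadCoeff' (p i) := by
  simp only [degree'_eq_degree, leadCoeff'_eq_leadingCoeff] at ht hg ⊢
  set q := ∑ i ∈ F, h i • monomial (t - m.degree (p i)) (1 : R) * p i
  have hcoeff : q.coeff t = ∑ i ∈ F, h i * m.leadingCoeff (p i) := by
    rw [coeff_sum]
    exact Finset.sum_congr rfl fun i hi => coeff_smul_monomial_sub_mul (ht i hi) _ _
  have hdeg : m.degree q = t :=
    degree_eq_of_degree_le_of_coeff_ne_zero
      (degree_sum_le_of_forall_le fun i hi => degree_smul_monomial_sub_degree_mul_le (ht i hi) _)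
      (hcoeff ▸ hg)
  exact ⟨hdeg, by rw [leadingCoeff, hdeg, hcoeff]⟩

/-- The head monomial of a G-polynomial: if g = Σ hᵢ·HC(pᵢ) is nonzero, then the
G-polynomial Σ hᵢ • X^(t - HT(pᵢ)) * pᵢ has head term t and head coefficient g. -/
theorem gPolynomial_head {σ R ι : Type*} [CommRing R] [Finite σ]
    (m : MonomialOrder σ) (F : Finset ι) (p : ι → MvPolynomial σ R)
    (hp : ∀ i ∈ F, p i ≠ 0) (t : σ →₀ ℕ) (ht : ∀ i ∈ F, m.degree' (p i) ≤ t)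
    (h : ι → R) (hg : ∑ i ∈ F, h i * m.leadCoeff' (p i) ≠ 0) :
    m.degree' (∑ i ∈ F, h i • (monomial (t - m.degree' (p i)) 1 : MvPolynomial σ R) * p i) = t ∧
      m.leadCoeff' (∑ i ∈ F, h i • (monomial (t - m.degree' (p i)) 1 : MvPolynomial σ R) * p i) =
        ∑ i ∈ F, h i * m.leadCoeff' (p i) :=
  gPolynomial_head_general m F p t ht h hg
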